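/- Let G = M_27 = ⟨a, b | a⁹ = b³ = e, b⁻¹ab = a⁴⟩ and let 𝒜 be the S-ring over G whose basic sets are Z₀ = {e}, Z₁ = {a³b, a⁶b²}, Z₂ = {a, a³, a⁶, a⁸, a⁴b², a⁷b, a⁸b, a⁸b²}, and Z₃ = G \ (Z₀ ∪ Z₁ ∪ Z₂). Then 𝒜 is not schurian. -/

import Mathlib

open scoped Pointwise

/-- For `X ⊆ G`, the element `X̲ = Σ_{x ∈ X} x` of the integral group ring `ℤG`. -/
noncomputable def grpSum (G : Type*) [Group G] (X : Set G) : MonoidAlgebra ℤ G :=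
  ∑ᶠ x ∈ X, MonoidAlgebra.of ℤ G x

/-- The ℤ-span of the sums `X̲` over `X ∈ 𝒮` in the group ring `ℤG`. -/
noncomputable def sRingSpan (G : Type*) [Group G] (S : Set (Set G)) :
    Submodule ℤ (MonoidAlgebra ℤ G) :=
  Submodule.span ℤ (grpSum G '' S)

/-- `S` is the set of basic sets of an S-ring over `G`: `S` is a partition of `G`
containing `{1}`, closed under inversion, and its ℤ-span is closed under multiplication. -/
structure IsSRing (G : Type*) [Group G] [Finite G] (S : Set (Set G)) : Prop where
  nonempty : ∀ X ∈ S, X.Nonempty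
  covers : ∀ g : G, ∃! X, X ∈ S ∧ g ∈ X
  one_mem : ({1} : Set G) ∈ S
  inv_mem : ∀ X ∈ S, X⁻¹ ∈ S
  mul_mem : ∀ X ∈ S, ∀ Y ∈ S, grpSum G X * grpSum G Y ∈ sRingSpan G S

/-- The subgroup `G_right` of `Sym(G)` consisting of the right translations `x ↦ x * g`. -/
def rightShifts (G : Type*) [Group G] : Subgroup (Equiv.Perm G) where
  carrier := {σ | ∃ g : G, σ = Equiv.mulRight g}
  one_mem' := ⟨1, Equiv.ext fun x => by simp⟩
  mul_mem' := by
    rintro σ τ ⟨g, rfl⟩ ⟨h, rfl⟩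
    exact ⟨h * g, Equiv.ext fun x => by simp [Equiv.Perm.mul_apply, mul_assoc]⟩
  inv_mem' := by
    rintro σ ⟨g, rfl⟩
    exact ⟨g⁻¹, by simp [Equiv.Perm.inv_def]⟩

/-- The orbits of the stabilizer `Γ_e` of the identity in `Γ`, as subsets of `G`. -/
def stabOrbits {G : Type*} [Group G] (Γ : Subgroup (Equiv.Perm G)) : Set (Set G) :=
  {X | ∃ g : G, X = {h | ∃ σ ∈ Γ, σ 1 = 1 ∧ σ g = h}}

/-- An S-ring (given by its partition `S` of basic sets) is schurian if its span equals
`𝒜(Γ,G)` for some `Γ` with `G_right ≤ Γ ≤ Sym(G)`. -/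
def IsSchurian (G : Type*) [Group G] (S : Set (Set G)) : Prop :=
  ∃ Γ : Subgroup (Equiv.Perm G), rightShifts G ≤ Γ ∧
    sRingSpan G S = sRingSpan G (stabOrbits Γ)

/-- The automorphism group `Aut(𝒜)` of the S-ring with basic sets `S`: bijections of `G`
fixing `1` and preserving each basic relation `R(X) = {(g, xg) : g ∈ G, x ∈ X}`. -/
def srAut {G : Type*} [Group G] (S : Set (Set G)) : Subgroup (Equiv.Perm G) where
  carrier := {f | f 1 = 1 ∧ ∀ X ∈ S, ∀ g h : G, (h * g⁻¹ ∈ X ↔ f h * (f g)⁻¹ ∈ X)}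
  one_mem' := ⟨rfl, fun X _ g h => by simp⟩
  mul_mem' := by
    rintro f₁ f₂ ⟨e₁, p₁⟩ ⟨e₂, p₂⟩
    refine ⟨by simp [Equiv.Perm.mul_apply, e₂, e₁], fun X hX g h => ?_⟩
    simpa [Equiv.Perm.mul_apply] using (p₂ X hX g h).trans (p₁ X hX (f₂ g) (f₂ h))
  inv_mem' := by
    rintro f ⟨e₁, p₁⟩
    refine ⟨by rw [Equiv.Perm.inv_def, Equiv.symm_apply_eq, e₁], fun X hX g h => ?_⟩
    simpa using (p₁ X hX (f⁻¹ g) (f⁻¹ h)).symm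

/-- The set of orbits of a subgroup `Δ ≤ Sym(G)` on `G`. -/
def permOrbits {G : Type*} [Group G] (Δ : Subgroup (Equiv.Perm G)) : Set (Set G) :=
  {X | ∃ g : G, X = {h | ∃ σ ∈ Δ, σ g = h}}

/-- `P` is a block system for `Γ ≤ Sym(G)` acting on `G`. -/
def IsBlockSystem {G : Type*} [Group G] (Γ : Subgroup (Equiv.Perm G))
    (P : Set (Set G)) : Prop :=
  (∀ g : G, ∃! B, B ∈ P ∧ g ∈ B) ∧ (∀ σ ∈ Γ, ∀ B ∈ P, σ '' B ∈ P)

/-- The partition of `G` into the cosets `{Hg : g ∈ G}` of a subset `H ⊆ G`. -/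
def cosetsOf {G : Type*} [Group G] (H : Set G) : Set (Set G) :=
  {B | ∃ g : G, B = {x | ∃ u ∈ H, x = u * g}}

/-- The partition of `G` into singletons. -/
def singletonPartition (G : Type*) : Set (Set G) := {B | ∃ g : G, B = {g}}

/-!
If `𝒜 = 𝒜(Γ, G)`, some element of the stabilizer `Γ_e` sends `a` to `a³`, since both lie in the
basic set `Z₂`; and every element of `Γ_e` preserves the basic relations, i.e. lies in `Aut(𝒜)`.
Transported to an explicit model of `M₂₇`, a finite search shows that no permutation fixing `e` and
preserving the relations of `Z₁` and `Z₂` sends `a` to `a³`.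
-/

section SRing

variable {G : Type*} [Group G]

lemma mem_srAut {S : Set (Set G)} {f : Equiv.Perm G} :
    f ∈ srAut S ↔ f 1 = 1 ∧ ∀ X ∈ S, ∀ g h : G, (h * g⁻¹ ∈ X ↔ f h * (f g)⁻¹ ∈ X) :=
  Iff.rfl

lemma grpSum_coeff [Finite G] (X : Set G) (y : G) [Decidable (y ∈ X)] :
    (grpSum G X).coeff y = if y ∈ X then 1 else 0 := by
  classical
  rw [grpSum, finsum_mem_eq_finite_toFinset_sum _ X.toFinite, MonoidAlgebra.coeff_sum,
    Finsupp.finsetSum_apply]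
  simp [MonoidAlgebra.of_apply, MonoidAlgebra.coeff_single, Finsupp.single_apply]

lemma coeff_eq_of_mem_sRingSpan [Finite G] {P : Set (Set G)} (hP : ∀ g, ∃! X, X ∈ P ∧ g ∈ X)
    {Y : Set G} (hY : Y ∈ P) {y y' : G} (hy : y ∈ Y) (hy' : y' ∈ Y)
    {w : MonoidAlgebra ℤ G} (hw : w ∈ sRingSpan G P) : w.coeff y = w.coeff y' := by
  classical
  induction hw using Submodule.span_induction with
  | mem _ hX =>
    obtain ⟨X, hX, rfl⟩ := hX
    have hiff : y ∈ X ↔ y' ∈ X :=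
      ⟨fun h => Setoid.eq_of_mem_eqv_class hP hX h hY hy ▸ hy',
        fun h => Setoid.eq_of_mem_eqv_class hP hX h hY hy' ▸ hy⟩
    simp only [grpSum_coeff, hiff]
  | zero => simp
  | add _ _ _ _ h₁ h₂ => simp [MonoidAlgebra.coeff_add, h₁, h₂]
  | smul c _ _ h => rw [MonoidAlgebra.coeff_smul_apply, MonoidAlgebra.coeff_smul_apply, h]

lemma subset_of_grpSum_mem_sRingSpan [Finite G] {P : Set (Set G)}
    (hP : ∀ g, ∃! X, X ∈ P ∧ g ∈ X) {X Y : Set G} (hX : X ∈ P)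
    (hY : grpSum G Y ∈ sRingSpan G P) {y : G} (hyX : y ∈ X) (hyY : y ∈ Y) : X ⊆ Y := by
  classical
  intro z hz
  have h := coeff_eq_of_mem_sRingSpan hP hX hz hyX hY
  rw [grpSum_coeff, grpSum_coeff, if_pos hyY] at h
  by_contra hzY
  simp [hzY] at h

lemma subset_of_sRingSpan_eq [Finite G] {P Q : Set (Set G)}
    (hP : ∀ g, ∃! X, X ∈ P ∧ g ∈ X) (hQ : ∀ g, ∃! X, X ∈ Q ∧ g ∈ X)
    (hP_nonempty : ∀ X ∈ P, X.Nonempty) (h : sRingSpan G P = sRingSpan G Q) : P ⊆ Q := by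
  intro X hX
  obtain ⟨y, hyX⟩ := hP_nonempty X hX
  obtain ⟨Y, ⟨hY, hyY⟩, -⟩ := hQ y
  have hXY : X ⊆ Y :=
    subset_of_grpSum_mem_sRingSpan hP hX (h ▸ Submodule.subset_span ⟨Y, hY, rfl⟩) hyX hyY
  have hYX : Y ⊆ X :=
    subset_of_grpSum_mem_sRingSpan hQ hY (h ▸ Submodule.subset_span ⟨X, hX, rfl⟩) hyY hyX
  exact hXY.antisymm hYX ▸ hY

variable {Γ : Subgroup (Equiv.Perm G)}

lemma apply_mem_of_mem_stabOrbits {X : Set G} (hX : X ∈ stabOrbits Γ) {σ : Equiv.Perm G}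
    (hσ : σ ∈ Γ) (hσ1 : σ 1 = 1) {x : G} (hx : x ∈ X) : σ x ∈ X := by
  obtain ⟨g, rfl⟩ := hX
  obtain ⟨τ, hτ, hτ1, rfl⟩ := hx
  exact ⟨σ * τ, Γ.mul_mem hσ hτ, by simp [hτ1, hσ1], rfl⟩

lemma exists_apply_eq_of_mem_stabOrbits {X : Set G} (hX : X ∈ stabOrbits Γ) {x y : G}
    (hx : x ∈ X) (hy : y ∈ X) : ∃ σ ∈ Γ, σ 1 = 1 ∧ σ x = y := by
  obtain ⟨g, rfl⟩ := hX
  obtain ⟨τ, hτ, hτ1, rfl⟩ := hx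
  obtain ⟨σ, hσ, hσ1, rfl⟩ := hy
  refine ⟨σ * τ⁻¹, Γ.mul_mem hσ (Γ.inv_mem hτ), ?_, by simp⟩
  rw [Equiv.Perm.mul_apply, Equiv.Perm.inv_eq_iff_eq.2 hτ1.symm, hσ1]

lemma stabOrbits_covers (g : G) : ∃! X, X ∈ stabOrbits Γ ∧ g ∈ X := by
  refine ⟨_, ⟨⟨g, rfl⟩, 1, Γ.one_mem, rfl, rfl⟩, fun X ⟨hX, hgX⟩ => Set.ext fun h => ?_⟩
  refine ⟨fun hh => exists_apply_eq_of_mem_stabOrbits hX hgX hh, ?_⟩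
  rintro ⟨σ, hσ, hσ1, rfl⟩
  exact apply_mem_of_mem_stabOrbits hX hσ hσ1 hgX

lemma apply_mul_inv_mem_of_mem_stabOrbits (hΓ : rightShifts G ≤ Γ) {X : Set G}
    (hX : X ∈ stabOrbits Γ) {σ : Equiv.Perm G} (hσ : σ ∈ Γ) {g h : G} (hgh : h * g⁻¹ ∈ X) :
    σ h * (σ g)⁻¹ ∈ X := by
  have hρ : Equiv.mulRight (σ g)⁻¹ * σ * Equiv.mulRight g ∈ Γ :=
    Γ.mul_mem (Γ.mul_mem (hΓ ⟨_, rfl⟩) hσ) (hΓ ⟨_, rfl⟩)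
  simpa [mul_assoc] using apply_mem_of_mem_stabOrbits hX hρ (by simp) hgh

lemma mem_srAut_of_subset_stabOrbits (hΓ : rightShifts G ≤ Γ) {S : Set (Set G)}
    (hS : S ⊆ stabOrbits Γ) {σ : Equiv.Perm G} (hσ : σ ∈ Γ) (hσ1 : σ 1 = 1) :
    σ ∈ srAut S := by
  refine mem_srAut.2 ⟨hσ1, fun X hX g h => ⟨apply_mul_inv_mem_of_mem_stabOrbits hΓ (hS hX) hσ,
    fun hgh => ?_⟩⟩
  simpa using apply_mul_inv_mem_of_mem_stabOrbits hΓ (hS hX) (Γ.inv_mem hσ) hgh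

theorem IsSchurian.exists_mem_srAut_apply_eq [Finite G] {S : Set (Set G)} (hS : IsSRing G S)
    (hsch : IsSchurian G S) {X : Set G} (hX : X ∈ S) {x y : G} (hx : x ∈ X) (hy : y ∈ X) :
    ∃ f ∈ srAut S, f x = y := by
  obtain ⟨Γ, hΓ, hspan⟩ := hsch
  have hsub : S ⊆ stabOrbits Γ :=
    subset_of_sRingSpan_eq hS.covers stabOrbits_covers hS.nonempty hspan
  obtain ⟨σ, hσ, hσ1, hσx⟩ := exists_apply_eq_of_mem_stabOrbits (hsub hX) hx hy
  exact ⟨σ, mem_srAut_of_subset_stabOrbits hΓ hsub hσ hσ1, hσx⟩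

lemma permCongr_mem_srAut {H : Type*} [Group H] (E : H ≃* G) {S : Set (Set G)}
    {T : Set (Set H)} (hT : ∀ X ∈ T, E '' X ∈ S) {f : Equiv.Perm G} (hf : f ∈ srAut S) :
    E.symm.toEquiv.permCongr f ∈ srAut T := by
  refine mem_srAut.2 ⟨by simp [hf.1], fun X hX g h => ?_⟩
  have := hf.2 _ (hT X hX) (E g) (E h)
  rw [← map_inv, ← map_mul, E.injective.mem_set_image] at this
  rw [this, ← E.injective.mem_set_image]
  simp

end SRing

section Relations

variable {G : Type*} [Group G] {a b : G}

lemma pow_zmod_val_natCast {n : ℕ} (ha : a ^ n = 1) (m : ℕ) : a ^ (m : ZMod n).val = a ^ m := by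
  rw [ZMod.val_natCast, ← pow_eq_pow_mod m ha]

lemma mul_mul_inv_eq_pow_seven (ha : a ^ 9 = 1) (hab : b⁻¹ * a * b = a ^ 4) :
    b * a * b⁻¹ = a ^ 7 := by
  have hconj (n : ℕ) : (b * a * b⁻¹) ^ n = b * a ^ n * b⁻¹ := by
    simp [← MulAut.conj_apply]
  have h4 : (b * a * b⁻¹) ^ 4 = a := by rw [hconj, ← hab]; group
  have h9 : (b * a * b⁻¹) ^ 9 = 1 := by rw [hconj, ha]; group
  calc b * a * b⁻¹ = ((b * a * b⁻¹) ^ 9) ^ 3 * (b * a * b⁻¹) := by rw [h9, one_pow, one_mul]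
    _ = ((b * a * b⁻¹) ^ 4) ^ 7 := by rw [← pow_mul, ← pow_succ, ← pow_mul]
    _ = a ^ 7 := by rw [h4]

lemma pow_mul_pow_of_mul_eq {k : ℕ} (h : b * a = a ^ k * b) (m n : ℕ) :
    b ^ m * a ^ n = a ^ (k ^ m * n) * b ^ m := by
  induction m generalizing n with
  | zero => simp
  | succ m ih =>
    have hn : b * a ^ n = a ^ (k * n) * b := by
      rw [pow_mul, ← (SemiconjBy.pow_right h n).eq]
    rw [pow_succ, mul_assoc, hn, ← mul_assoc, ih, mul_assoc, ← pow_succ]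
    congr 2
    ring

end Relations

/-- `⟨i, j⟩ : M27` stands for `a ^ i * b ^ j`; since `b a b⁻¹ = a ^ 7`, the product is
`⟨i, j⟩ * ⟨k, l⟩ = ⟨i + 7 ^ j * k, j + l⟩`. -/
@[ext] structure M27 where
  x : ZMod 9
  y : ZMod 3
  deriving DecidableEq, Fintype

namespace M27

def twist (j : ZMod 3) : ZMod 9 := 7 ^ j.val

lemma twist_add : ∀ j k : ZMod 3, twist (j + k) = twist j * twist k := by decide

instance : One M27 := ⟨⟨0, 0⟩⟩
instance : Mul M27 := ⟨fun u v => ⟨u.x + twist u.y * v.x, u.y + v.y⟩⟩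
instance : Inv M27 := ⟨fun u => ⟨-(twist (-u.y) * u.x), -u.y⟩⟩

lemma one_def : (1 : M27) = ⟨0, 0⟩ := rfl
lemma mul_def (u v : M27) : u * v = ⟨u.x + twist u.y * v.x, u.y + v.y⟩ := rfl
lemma inv_def (u : M27) : u⁻¹ = ⟨-(twist (-u.y) * u.x), -u.y⟩ := rfl

instance : Group M27 :=
  Group.ofLeftAxioms
    (fun u v w => by ext <;> simp only [mul_def, twist_add] <;> ring)
    (fun u => by ext <;> simp [mul_def, one_def, twist])
    (fun u => by ext <;> simp [mul_def, one_def, inv_def])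

lemma card_eq : Nat.card M27 = 27 := by
  rw [Nat.card_eq_fintype_card]; rfl

variable {G : Type*} [Group G] {a b : G}

def lift (ha : a ^ 9 = 1) (hb : b ^ 3 = 1) (hab : b⁻¹ * a * b = a ^ 4) : M27 →* G where
  toFun u := a ^ u.x.val * b ^ u.y.val
  map_one' := by simp [one_def]
  map_mul' u v := by
    have hx : u.x + twist u.y * v.x = ((u.x.val + 7 ^ u.y.val * v.x.val : ℕ) : ZMod 9) := by
      simp [twist]
    have hy : u.y + v.y = ((u.y.val + v.y.val : ℕ) : ZMod 3) := by simp
    have hba : b * a = a ^ 7 * b := by rw [← mul_mul_inv_eq_pow_seven ha hab]; group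
    simp only [mul_def]
    rw [hx, hy, pow_zmod_val_natCast ha, pow_zmod_val_natCast hb, pow_add, pow_add]
    simp only [mul_assoc]
    rw [← mul_assoc (b ^ u.y.val), pow_mul_pow_of_mul_eq hba, mul_assoc]

lemma lift_mk (ha : a ^ 9 = 1) (hb : b ^ 3 = 1) (hab : b⁻¹ * a * b = a ^ 4) (i : ZMod 9)
    (j : ZMod 3) : lift ha hb hab ⟨i, j⟩ = a ^ i.val * b ^ j.val := rfl

lemma lift_bijective (ha : a ^ 9 = 1) (hb : b ^ 3 = 1) (hab : b⁻¹ * a * b = a ^ 4)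
    (hcard : Nat.card G = 27) (hgen : Subgroup.closure {a, b} = ⊤) :
    Function.Bijective (lift ha hb hab) := by
  refine (Nat.bijective_iff_surjective_and_card _).2 ⟨?_, by rw [card_eq, hcard]⟩
  rw [← MonoidHom.range_eq_top, eq_top_iff, ← hgen, Subgroup.closure_le, Set.insert_subset_iff,
    Set.singleton_subset_iff]
  exact ⟨⟨⟨1, 0⟩, by simp [lift_mk, ZMod.val_one_eq_one_mod]⟩,
    ⟨⟨0, 1⟩, by simp [lift_mk, ZMod.val_one_eq_one_mod]⟩⟩

def z1 : Finset M27 := {⟨3, 1⟩, ⟨6, 2⟩}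
def z2 : Finset M27 := {⟨1, 0⟩, ⟨3, 0⟩, ⟨6, 0⟩, ⟨8, 0⟩, ⟨4, 2⟩, ⟨7, 1⟩, ⟨8, 1⟩, ⟨8, 2⟩}

/-- `v` is a possible image of `x` under a map preserving the relations of `z1` and `z2` that
extends the partial map `K`, given as a list of pairs `(u, f u)`. -/
def Compatible (K : List (M27 × M27)) (x v : M27) : Prop :=
  ∀ p ∈ K, ∀ i, (x * p.1⁻¹ ∈ ![z1, z2] i ↔ v * p.2⁻¹ ∈ ![z1, z2] i) ∧
    (p.1 * x⁻¹ ∈ ![z1, z2] i ↔ p.2 * v⁻¹ ∈ ![z1, z2] i)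

instance (K : List (M27 × M27)) (x v : M27) : Decidable (Compatible K x v) := by
  unfold Compatible; infer_instance

def extend (Ks : Finset (List (M27 × M27))) (x : M27) : Finset (List (M27 × M27)) :=
  Ks.biUnion fun K => (Finset.univ.filter (Compatible K x)).image fun v => (x, v) :: K

lemma exists_mem_foldl_extend {f : Equiv.Perm M27} (hf : f ∈ srAut {(z1 : Set M27), ↑z2})
    (xs : List M27) {Ks : Finset (List (M27 × M27))} (hKs : ∃ K ∈ Ks, ∀ p ∈ K, f p.1 = p.2) :
    ∃ K ∈ xs.foldl extend Ks, ∀ p ∈ K, f p.1 = p.2 := by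
  induction xs generalizing Ks with
  | nil => exact hKs
  | cons x xs ih =>
    obtain ⟨K, hK, hfK⟩ := hKs
    refine ih ⟨(x, f x) :: K, Finset.mem_biUnion.2 ⟨K, hK, Finset.mem_image.2 ⟨f x, ?_, rfl⟩⟩,
      by simpa using hfK⟩
    refine Finset.mem_filter.2 ⟨Finset.mem_univ _, fun p hp i => ?_⟩
    have hi : (↑(![z1, z2] i) : Set M27) ∈ ({(z1 : Set M27), ↑z2} : Set (Set M27)) := by
      fin_cases i <;> simp
    rw [← hfK p hp]
    exact ⟨hf.2 _ hi p.1 x, hf.2 _ hi x p.1⟩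

set_option maxRecDepth 10000 in
/-- Every extension of `1 ↦ 1`, `a ↦ a³` to `a⁸b², ab, ab², a²b` admits no image for `a³`. -/
lemma foldl_extend_eq_empty :
    [⟨8, 2⟩, ⟨1, 1⟩, ⟨1, 2⟩, ⟨2, 1⟩, ⟨3, 0⟩].foldl extend {[(1, 1), (⟨1, 0⟩, ⟨3, 0⟩)]} = ∅ := by
  decide

theorem srAut_apply_ne {f : Equiv.Perm M27} (hf : f ∈ srAut {(z1 : Set M27), ↑z2}) :
    f ⟨1, 0⟩ ≠ ⟨3, 0⟩ := by
  intro hfa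
  have h := exists_mem_foldl_extend hf [⟨8, 2⟩, ⟨1, 1⟩, ⟨1, 2⟩, ⟨2, 1⟩, ⟨3, 0⟩]
    (Ks := {[(1, 1), (⟨1, 0⟩, ⟨3, 0⟩)]}) ⟨_, Finset.mem_singleton_self _, by simp [hf.1, hfa]⟩
  rw [foldl_extend_eq_empty] at h
  simp at h

end M27

theorem M27_sring_not_schurian_general
    {G : Type*} [Group G] [Finite G] (a b : G)
    (hcard : Nat.card G = 27) (ha : a ^ 9 = 1) (hb3 : b ^ 3 = 1)
    (hab : b⁻¹ * a * b = a ^ 4) (hgen : Subgroup.closure {a, b} = ⊤)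
    (Z0 Z1 Z2 Z3 : Set G) (S : Set (Set G))
    (hZ1 : Z1 = {a ^ 3 * b, a ^ 6 * b ^ 2})
    (hZ2 : Z2 = {a, a ^ 3, a ^ 6, a ^ 8, a ^ 4 * b ^ 2, a ^ 7 * b, a ^ 8 * b, a ^ 8 * b ^ 2})
    (hS : S = {Z0, Z1, Z2, Z3})
    (hSR : IsSRing G S) :
    ¬ IsSchurian G S := by
  intro hsch
  let E : M27 ≃* G := MulEquiv.ofBijective _ (M27.lift_bijective ha hb3 hab hcard hgen)
  have hE (i : ZMod 9) (j : ZMod 3) : E ⟨i, j⟩ = a ^ i.val * b ^ j.val := rfl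
  obtain ⟨f, hf, hfa⟩ := hsch.exists_mem_srAut_apply_eq hSR (X := Z2) (by simp [hS])
    (x := a) (y := a ^ 3) (by simp [hZ2]) (by simp [hZ2])
  have himage : ∀ X ∈ ({(M27.z1 : Set M27), ↑M27.z2} : Set (Set M27)), E '' X ∈ S := by
    simp [hS, hZ1, hZ2, M27.z1, M27.z2, Set.image_insert_eq, hE, ZMod.val_ofNat,
      ZMod.val_one_eq_one_mod]
  refine M27.srAut_apply_ne (permCongr_mem_srAut E himage hf) ?_
  have h1 : E ⟨1, 0⟩ = a := by simp [hE, ZMod.val_one_eq_one_mod]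
  have h3 : E ⟨3, 0⟩ = a ^ 3 := by simp [hE, ZMod.val_ofNat]
  simp [Equiv.permCongr_apply, h1, hfa, ← h3]

/-- The S-ring over `M₂₇` with basic sets `Z₀, Z₁, Z₂, Z₃` is not schurian. -/
theorem M27_sring_not_schurian
    {G : Type*} [Group G] [Finite G] (a b : G)
    (hcard : Nat.card G = 27) (ha : a ^ 9 = 1) (hb3 : b ^ 3 = 1)
    (hab : b⁻¹ * a * b = a ^ 4) (hgen : Subgroup.closure {a, b} = ⊤)
    (Z0 Z1 Z2 Z3 : Set G) (S : Set (Set G))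
    (hZ0 : Z0 = {1}) (hZ1 : Z1 = {a ^ 3 * b, a ^ 6 * b ^ 2})
    (hZ2 : Z2 = {a, a ^ 3, a ^ 6, a ^ 8, a ^ 4 * b ^ 2, a ^ 7 * b, a ^ 8 * b, a ^ 8 * b ^ 2})
    (hZ3 : Z3 = Set.univ \ (Z0 ∪ Z1 ∪ Z2))
    (hS : S = {Z0, Z1, Z2, Z3})
    (hSR : IsSRing G S) :
    ¬ IsSchurian G S :=
  M27_sring_not_schurian_general a b hcard ha hb3 hab hgen Z0 Z1 Z2 Z3 S hZ1 hZ2 hS hSR
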